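/- Define for J₂ > 0 and η ∈ [0,1] the quantity K(η) = ∫_{−π}^{π} I₀(√(1 + η cos θ))·e^{J₂·cos 2θ} dθ/(2π) (the J₂-model at φ = π/2). Then ∂K/∂η = ∫_{−π}^{π} (I₁(g)/(2g))·cos θ·e^{J₂ cos 2θ} dθ/(2π) ≥ 0, where g = √(1 + η cos θ); hence K is nondecreasing in η and maximized at η = 1. -/

import Mathlib

open Real

/-- Modified Bessel function of the first kind of order 0. -/
noncomputable def besselI0 (x : ℝ) : ℝ :=
  ∑' n : ℕ, (x / 2) ^ (2 * n) / ((Nat.factorial n : ℝ)) ^ 2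

/-- The continuous extension of `I₁(√u)/√u`, a power series in `u` with
nonnegative coefficients taking the value `1/2` at `u = 0`. -/
noncomputable def besselI1ratio (u : ℝ) : ℝ :=
  ∑' n : ℕ, u ^ n / (2 * 4 ^ n * (Nat.factorial n : ℝ) * (Nat.factorial (n + 1) : ℝ))

/-- The `J₂`-model partition function at `φ = π/2` as a function of `η`. -/
noncomputable def KJ2eta (J₂ η : ℝ) : ℝ :=
  ∫ θ in (-π)..π,
    besselI0 (Real.sqrt (1 + η * Real.cos θ)) * Real.exp (J₂ * Real.cos (2 * θ)) / (2 * π)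

namespace KJ2aux

noncomputable def pser (c : ℕ → ℝ) (u : ℝ) : ℝ := ∑' n : ℕ, c n * u ^ n

noncomputable def c0 (n : ℕ) : ℝ := 1 / (4 ^ n * ((Nat.factorial n : ℝ)) ^ 2)
noncomputable def c1 (n : ℕ) : ℝ :=
  1 / (2 * 4 ^ n * (Nat.factorial n : ℝ) * (Nat.factorial (n + 1) : ℝ))

lemma fact_pos (n : ℕ) : (0:ℝ) < (Nat.factorial n : ℝ) := by
  exact_mod_cast Nat.factorial_pos n

lemma one_le_fact (n : ℕ) : (1:ℝ) ≤ (Nat.factorial n : ℝ) := by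
  exact_mod_cast Nat.one_le_iff_ne_zero.mpr (Nat.factorial_ne_zero n)

lemma c0_nonneg (n : ℕ) : 0 ≤ c0 n := by unfold c0; positivity

lemma c1_nonneg (n : ℕ) : 0 ≤ c1 n := by unfold c1; positivity

lemma c0_le (n : ℕ) : |c0 n| ≤ 1 / (2 ^ n * (Nat.factorial n : ℝ)) := by
  rw [abs_of_nonneg (c0_nonneg n)]
  unfold c0
  apply one_div_le_one_div_of_le (by positivity)
  have h1 : (2:ℝ) ^ n ≤ 4 ^ n := pow_le_pow_left₀ (by norm_num) (by norm_num) n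
  have h2 : (Nat.factorial n : ℝ) ≤ ((Nat.factorial n : ℝ)) ^ 2 := by
    nlinarith [one_le_fact n]
  calc (2:ℝ) ^ n * (Nat.factorial n : ℝ) ≤ 4 ^ n * (Nat.factorial n : ℝ) :=
        mul_le_mul_of_nonneg_right h1 (fact_pos n).le
    _ ≤ 4 ^ n * ((Nat.factorial n : ℝ)) ^ 2 := by
        apply mul_le_mul_of_nonneg_left h2 (by positivity)

lemma c1_le (n : ℕ) : |c1 n| ≤ 1 / (2 ^ n * (Nat.factorial n : ℝ)) := by
  rw [abs_of_nonneg (c1_nonneg n)]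
  unfold c1
  apply one_div_le_one_div_of_le (by positivity)
  have h1 : (2:ℝ) ^ n ≤ 4 ^ n := pow_le_pow_left₀ (by norm_num) (by norm_num) n
  have h4 : (0:ℝ) < 4 ^ n := by positivity
  have h3 : (1:ℝ) ≤ (Nat.factorial (n+1) : ℝ) := one_le_fact (n+1)
  calc (2:ℝ) ^ n * (Nat.factorial n : ℝ) ≤ 4 ^ n * (Nat.factorial n : ℝ) :=
        mul_le_mul_of_nonneg_right h1 (fact_pos n).le
    _ = (4 ^ n * (Nat.factorial n : ℝ)) * 1 := by ring
    _ ≤ (4 ^ n * (Nat.factorial n : ℝ)) * (2 * (Nat.factorial (n+1) : ℝ)) := by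
        apply mul_le_mul_of_nonneg_left (by linarith) (by positivity)
    _ = 2 * 4 ^ n * (Nat.factorial n : ℝ) * (Nat.factorial (n + 1) : ℝ) := by ring

lemma summable_bound (R : ℝ) (hR : 0 ≤ R) :
    Summable (fun n : ℕ => (n:ℝ) * (1 / (2 ^ n * (Nat.factorial n : ℝ))) * R ^ n) := by
  refine Summable.of_nonneg_of_le (fun n => by positivity) (fun n => ?_)
    (Real.summable_pow_div_factorial R)
  have hn : (n:ℝ) ≤ 2 ^ n := by exact_mod_cast (Nat.lt_two_pow_self (n := n)).le
  have hf := fact_pos n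
  have h2 : (0:ℝ) < 2 ^ n := by positivity
  calc (n:ℝ) * (1 / (2 ^ n * (Nat.factorial n : ℝ))) * R ^ n
      ≤ (2:ℝ)^n * (1 / (2 ^ n * (Nat.factorial n : ℝ))) * R ^ n :=
        mul_le_mul_of_nonneg_right (mul_le_mul_of_nonneg_right hn (by positivity)) (by positivity)
    _ = R ^ n / (Nat.factorial n : ℝ) := by field_simp

lemma summable_pser {c : ℕ → ℝ} (hc : ∀ n, |c n| ≤ 1 / (2 ^ n * (Nat.factorial n : ℝ))) (u : ℝ) :
    Summable (fun n : ℕ => c n * u ^ n) := by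
  refine Summable.of_abs (Summable.of_nonneg_of_le (fun n => abs_nonneg _) (fun n => ?_)
    (Real.summable_pow_div_factorial |u|))
  rw [abs_mul, abs_pow]
  have h2 : (0:ℝ) < 2 ^ n := by positivity
  have h1 : (1:ℝ) ≤ 2 ^ n := one_le_pow₀ (by norm_num)
  calc |c n| * |u| ^ n ≤ (1 / (2 ^ n * (Nat.factorial n : ℝ))) * |u| ^ n :=
        mul_le_mul_of_nonneg_right (hc n) (by positivity)
    _ ≤ (1 / (Nat.factorial n : ℝ)) * |u| ^ n := by
        apply mul_le_mul_of_nonneg_right _ (by positivity)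
        apply one_div_le_one_div_of_le (fact_pos n)
        nlinarith [fact_pos n]
    _ = |u| ^ n / (Nat.factorial n : ℝ) := by ring

lemma summable_pser_deriv {c : ℕ → ℝ}
    (hc : ∀ n, |c n| ≤ 1 / (2 ^ n * (Nat.factorial n : ℝ))) (u : ℝ) :
    Summable (fun n : ℕ => c n * ((n:ℝ) * u ^ (n - 1))) := by
  set R := |u| + 1 with hRdef
  have hR1 : 1 ≤ R := by linarith [abs_nonneg u]
  have hR0 : 0 ≤ R := le_trans zero_le_one hR1
  refine Summable.of_abs (Summable.of_nonneg_of_le (fun n => abs_nonneg _) (fun n => ?_)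
    (summable_bound R hR0))
  rw [abs_mul, abs_mul, abs_pow, Nat.abs_cast]
  have hu : |u| ^ (n-1) ≤ R ^ n :=
    le_trans (pow_le_pow_left₀ (abs_nonneg u) (by linarith [le_refl R]) _)
      (pow_le_pow_right₀ hR1 (Nat.sub_le n 1))
  calc |c n| * ((n:ℝ) * |u| ^ (n-1))
      ≤ (1 / (2 ^ n * (Nat.factorial n : ℝ))) * ((n:ℝ) * R ^ n) := by
        apply mul_le_mul (hc n) (mul_le_mul_of_nonneg_left hu (Nat.cast_nonneg n))
          (by positivity) (by positivity)
    _ = (n:ℝ) * (1 / (2 ^ n * (Nat.factorial n : ℝ))) * R ^ n := by ring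

lemma pser_hasDerivAt {c : ℕ → ℝ}
    (hc : ∀ n, |c n| ≤ 1 / (2 ^ n * (Nat.factorial n : ℝ))) (x : ℝ) :
    HasDerivAt (pser c) (∑' n : ℕ, c n * ((n:ℝ) * x ^ (n - 1))) x := by
  set R := |x| + 1 with hRdef
  have hR1 : 1 ≤ R := by linarith [abs_nonneg x]
  have hR0 : 0 ≤ R := le_trans zero_le_one hR1
  have hxR : x ∈ Set.Ioo (-R) R := by
    constructor
    · nlinarith [neg_abs_le x]
    · nlinarith [le_abs_self x]
  exact hasDerivAt_tsum_of_isPreconnected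
    (summable_bound R hR0) isOpen_Ioo (convex_Ioo _ _).isPreconnected
    (g := fun n y => c n * y ^ n) (g' := fun n y => c n * ((n:ℝ) * y ^ (n-1)))
    (fun n y _ => (hasDerivAt_pow n y).const_mul (c n))
    (fun n y hy => by
      rw [Real.norm_eq_abs, abs_mul, abs_mul, abs_pow, Nat.abs_cast]
      have hyR : |y| ≤ R := by
        rw [abs_le]; exact ⟨hy.1.le, hy.2.le⟩
      have h1 : |y| ^ (n-1) ≤ R ^ n :=
        le_trans (pow_le_pow_left₀ (abs_nonneg y) hyR _) (pow_le_pow_right₀ hR1 (Nat.sub_le n 1))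
      calc |c n| * ((n:ℝ) * |y| ^ (n-1))
          ≤ (1 / (2 ^ n * (Nat.factorial n : ℝ))) * ((n:ℝ) * R ^ n) :=
            mul_le_mul (hc n) (mul_le_mul_of_nonneg_left h1 (Nat.cast_nonneg n))
              (by positivity) (by positivity)
        _ = (n:ℝ) * (1 / (2 ^ n * (Nat.factorial n : ℝ))) * R ^ n := by ring)
    (show (0:ℝ) ∈ Set.Ioo (-R) R by constructor <;> nlinarith)
    (by
      apply summable_of_ne_finset_zero (s := {0})
      intro n hn
      simp only [Finset.mem_singleton] at hn
      simp [zero_pow hn])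
    hxR


lemma besselI0_eq_pser_sq (x : ℝ) : besselI0 x = pser c0 (x ^ 2) := by
  unfold besselI0 pser c0
  apply tsum_congr
  intro n
  have h2 : ((2:ℝ)) ^ (2 * n) = 4 ^ n := by
    rw [pow_mul]; norm_num
  rw [div_pow, h2, pow_mul]
  ring

lemma sqrt_sq_eq_max (v : ℝ) : (Real.sqrt v) ^ 2 = max v 0 := by
  rcases le_total 0 v with hv | hv
  · rw [Real.sq_sqrt hv, max_eq_left hv]
  · rw [Real.sqrt_eq_zero_of_nonpos hv, max_eq_right hv]
    norm_num

lemma besselI0_sqrt (v : ℝ) : besselI0 (Real.sqrt v) = pser c0 (max v 0) := by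
  rw [besselI0_eq_pser_sq, sqrt_sq_eq_max]

lemma I1r_eq_pser (u : ℝ) : besselI1ratio u = pser c1 u := by
  unfold besselI1ratio pser c1
  apply tsum_congr
  intro n
  ring

lemma deriv_c0_eq (x : ℝ) :
    (∑' n : ℕ, c0 n * ((n:ℝ) * x ^ (n - 1))) = besselI1ratio x / 2 := by
  rw [I1r_eq_pser, pser, ← tsum_div_const,
    Summable.tsum_eq_zero_add (summable_pser_deriv c0_le x)]
  simp only [Nat.cast_zero, zero_mul, mul_zero, zero_add]
  apply tsum_congr
  intro n
  have hf : (Nat.factorial (n+1) : ℝ) = ((n:ℝ)+1) * (Nat.factorial n : ℝ) := by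
    rw [Nat.factorial_succ]; push_cast; ring
  have hn1 : n + 1 - 1 = n := rfl
  unfold c0 c1
  rw [hn1, hf]
  have h1 : (Nat.factorial n : ℝ) ≠ 0 := (fact_pos n).ne'
  have h2 : ((n:ℝ)+1) ≠ 0 := by positivity
  have h4 : ((4:ℝ)) ^ (n+1) = 4 * 4 ^ n := by rw [pow_succ]; ring
  rw [h4]
  push_cast
  field_simp
  ring

lemma hasDerivAt_B0 (x : ℝ) : HasDerivAt (pser c0) (besselI1ratio x / 2) x := by
  have := pser_hasDerivAt c0_le x
  rwa [deriv_c0_eq] at this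

lemma cont_B0 : Continuous (pser c0) := by
  rw [continuous_iff_continuousAt]
  exact fun x => (hasDerivAt_B0 x).continuousAt

lemma cont_I1r : Continuous besselI1ratio := by
  rw [continuous_iff_continuousAt]
  intro x
  have h : besselI1ratio = pser c1 := funext I1r_eq_pser
  rw [h]
  exact (pser_hasDerivAt c1_le x).continuousAt

lemma I1r_nonneg {u : ℝ} (hu : 0 ≤ u) : 0 ≤ besselI1ratio u := by
  unfold besselI1ratio
  apply tsum_nonneg
  intro n
  positivity

lemma I1r_mono {a b : ℝ} (ha : 0 ≤ a) (hab : a ≤ b) :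
    besselI1ratio a ≤ besselI1ratio b := by
  rw [I1r_eq_pser, I1r_eq_pser]
  apply Summable.tsum_le_tsum _ (summable_pser c1_le a) (summable_pser c1_le b)
  intro n
  exact mul_le_mul_of_nonneg_left (pow_le_pow_left₀ ha hab n) (c1_nonneg n)

open MeasureTheory Metric Filter in
lemma key_hasDerivAt (J₂ : ℝ) {η : ℝ} (hη : η ∈ Set.Icc (0:ℝ) 1) :
    IntervalIntegrable (fun θ => besselI1ratio (1 + η * Real.cos θ) / 2 * Real.cos θ
        * Real.exp (J₂ * Real.cos (2 * θ)) / (2 * π)) volume (-π) π ∧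
    HasDerivAt (fun x => ∫ θ in (-π)..π,
        besselI0 (Real.sqrt (1 + x * Real.cos θ)) * Real.exp (J₂ * Real.cos (2 * θ)) / (2 * π))
      (∫ θ in (-π)..π, besselI1ratio (1 + η * Real.cos θ) / 2 * Real.cos θ
        * Real.exp (J₂ * Real.cos (2 * θ)) / (2 * π)) η := by
  obtain ⟨hη0, hη1⟩ := hη
  have hπ : 0 < π := Real.pi_pos
  set L : ℝ := besselI1ratio 3 / 2 with hLdef
  have hL0 : 0 ≤ L := by
    have := I1r_nonneg (show (0:ℝ) ≤ 3 by norm_num)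
    rw [hLdef]; linarith
  -- Lipschitz estimate for pser c0 on [0,3]
  have hlipB : ∀ a ∈ Set.Icc (0:ℝ) 3, ∀ b ∈ Set.Icc (0:ℝ) 3,
      |pser c0 b - pser c0 a| ≤ L * |b - a| := by
    intro a ha b hb
    have h := Convex.norm_image_sub_le_of_norm_hasDerivWithin_le
      (f := pser c0) (f' := fun u => besselI1ratio u / 2) (s := Set.Icc (0:ℝ) 3) (C := L)
      (fun u _ => (hasDerivAt_B0 u).hasDerivWithinAt)
      (fun u hu => by
        show ‖besselI1ratio u / 2‖ ≤ L
        rw [Real.norm_eq_abs, abs_of_nonneg (by linarith [I1r_nonneg hu.1])]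
        have := I1r_mono hu.1 hu.2
        rw [hLdef]; linarith)
      (convex_Icc _ _) ha hb
    simpa [Real.norm_eq_abs] using h
  have hFcont : ∀ x : ℝ, Continuous (fun θ =>
      besselI0 (Real.sqrt (1 + x * Real.cos θ)) * Real.exp (J₂ * Real.cos (2 * θ)) / (2 * π)) := by
    intro x
    have hrw : (fun θ => besselI0 (Real.sqrt (1 + x * Real.cos θ))
          * Real.exp (J₂ * Real.cos (2 * θ)) / (2 * π))
        = fun θ => pser c0 (max (1 + x * Real.cos θ) 0)
          * Real.exp (J₂ * Real.cos (2 * θ)) / (2 * π) := by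
      funext θ; rw [besselI0_sqrt]
    rw [hrw]
    apply Continuous.div_const
    exact (cont_B0.comp
        ((continuous_const.add (continuous_const.mul Real.continuous_cos)).max continuous_const)).mul
      (Real.continuous_exp.comp (continuous_const.mul
        (Real.continuous_cos.comp (continuous_const.mul continuous_id))))
  have hF'cont : Continuous (fun θ => besselI1ratio (1 + η * Real.cos θ) / 2 * Real.cos θ
      * Real.exp (J₂ * Real.cos (2 * θ)) / (2 * π)) := by
    apply Continuous.div_const
    exact (((cont_I1r.comp
        (continuous_const.add (continuous_const.mul Real.continuous_cos))).div_const 2).mul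
        Real.continuous_cos).mul
      (Real.continuous_exp.comp (continuous_const.mul
        (Real.continuous_cos.comp (continuous_const.mul continuous_id))))
  have hboundcont : Continuous (fun θ => L * (Real.exp (J₂ * Real.cos (2 * θ)) / (2 * π))) := by
    apply Continuous.mul continuous_const
    apply Continuous.div_const
    exact Real.continuous_exp.comp (continuous_const.mul
      (Real.continuous_cos.comp (continuous_const.mul continuous_id)))
  have main := intervalIntegral.hasDerivAt_integral_of_dominated_loc_of_lip
    (F := fun x θ => besselI0 (Real.sqrt (1 + x * Real.cos θ))
      * Real.exp (J₂ * Real.cos (2 * θ)) / (2 * π))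
    (F' := fun θ => besselI1ratio (1 + η * Real.cos θ) / 2 * Real.cos θ
      * Real.exp (J₂ * Real.cos (2 * θ)) / (2 * π))
    (bound := fun θ => L * (Real.exp (J₂ * Real.cos (2 * θ)) / (2 * π)))
    (μ := volume) (a := -π) (b := π) (x₀ := η) (s := ball η 1)
    (ball_mem_nhds η one_pos)
    (Eventually.of_forall fun x => (hFcont x).aestronglyMeasurable)
    ((hFcont η).intervalIntegrable _ _)
    hF'cont.aestronglyMeasurable.restrict
    ?_
    (hboundcont.intervalIntegrable _ _)
    ?_
  · exact ⟨main.1, main.2⟩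
  · -- Lipschitz
    apply ae_of_all
    intro θ _
    rw [lipschitzOnWith_iff_dist_le_mul]
    intro x hx y hy
    set E : ℝ := Real.exp (J₂ * Real.cos (2 * θ)) with hEdef
    have hE : 0 < E := Real.exp_pos _
    have habs : ∀ z : ℝ, z ∈ ball η 1 → max (1 + z * Real.cos θ) 0 ∈ Set.Icc (0:ℝ) 3 := by
      intro z hz
      constructor
      · exact le_max_right _ _
      · apply max_le _ (by norm_num)
        have hz2 : |z| < 2 := by
          have h1 : |z - η| < 1 := by
            have := mem_ball.mp hz
            rwa [Real.dist_eq] at this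
          have h2 := abs_sub_abs_le_abs_sub z η
          rw [abs_of_nonneg hη0] at h2
          linarith
        have : |z * Real.cos θ| ≤ |z| := by
          rw [abs_mul]
          calc |z| * |Real.cos θ| ≤ |z| * 1 :=
              mul_le_mul_of_nonneg_left (Real.abs_cos_le_one θ) (abs_nonneg z)
            _ = |z| := mul_one _
        have := abs_le.mp (le_of_lt (lt_of_le_of_lt this hz2))
        linarith [this.2]
    have hxI := habs x hx
    have hyI := habs y hy
    have hFdiff : besselI0 (Real.sqrt (1 + x * Real.cos θ)) * E / (2 * π)
        - besselI0 (Real.sqrt (1 + y * Real.cos θ)) * E / (2 * π)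
        = (pser c0 (max (1 + x * Real.cos θ) 0) - pser c0 (max (1 + y * Real.cos θ) 0))
          * (E / (2 * π)) := by
      rw [besselI0_sqrt, besselI0_sqrt]; ring
    have hmaxle : |max (1 + x * Real.cos θ) 0 - max (1 + y * Real.cos θ) 0| ≤ dist x y := by
      calc |max (1 + x * Real.cos θ) 0 - max (1 + y * Real.cos θ) 0|
          ≤ |(1 + x * Real.cos θ) - (1 + y * Real.cos θ)| := abs_max_sub_max_le_abs _ _ _
        _ = |Real.cos θ| * |x - y| := by
            rw [show (1 + x * Real.cos θ) - (1 + y * Real.cos θ) = Real.cos θ * (x - y) by ring,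
              abs_mul]
        _ ≤ 1 * |x - y| := mul_le_mul_of_nonneg_right (Real.abs_cos_le_one θ) (abs_nonneg _)
        _ = dist x y := by rw [one_mul, Real.dist_eq]
    rw [Real.dist_eq, hFdiff, abs_mul, abs_of_pos (by positivity : (0:ℝ) < E / (2 * π))]
    have hcoe : ((Real.nnabs (L * (E / (2 * π)))) : ℝ) = L * (E / (2 * π)) := by
      rw [Real.coe_nnabs, abs_of_nonneg (by positivity)]
    rw [hcoe]
    calc |pser c0 (max (1 + x * Real.cos θ) 0) - pser c0 (max (1 + y * Real.cos θ) 0)| * (E / (2 * π))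
        ≤ (L * |max (1 + x * Real.cos θ) 0 - max (1 + y * Real.cos θ) 0|) * (E / (2 * π)) :=
          mul_le_mul_of_nonneg_right (hlipB _ hyI _ hxI) (by positivity)
      _ ≤ (L * dist x y) * (E / (2 * π)) :=
          mul_le_mul_of_nonneg_right (mul_le_mul_of_nonneg_left hmaxle hL0) (by positivity)
      _ = L * (E / (2 * π)) * dist x y := by ring
  · -- differentiability a.e.
    have hae : ∀ᵐ θ : ℝ ∂volume, θ ≠ π := by
      refine MeasureTheory.ae_iff.mpr ?_
      simp only [not_not]
      simp [Set.setOf_eq_eq_singleton]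
    filter_upwards [hae] with θ hθπ hθmem
    have hpos : 0 < 1 + η * Real.cos θ := by
      rcases lt_or_ge 0 (1 + η * Real.cos θ) with h | h
      · exact h
      · exfalso
        have hc1 : -1 ≤ Real.cos θ := Real.neg_one_le_cos θ
        have hc2 : Real.cos θ ≤ 1 := Real.cos_le_one θ
        have hge : -1 ≤ η * Real.cos θ := by nlinarith
        have heq1 : η * Real.cos θ = -1 := le_antisymm (by linarith) hge
        have hcos : Real.cos θ = -1 := by nlinarith
        obtain ⟨k, hk⟩ := Real.cos_eq_neg_one_iff.mp hcos
        have hmem : θ ∈ Set.Ioc (-π) π := by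
          simpa [Set.uIoc_of_le (by linarith : -π ≤ π)] using hθmem
        have hk1 : (k:ℝ) ≤ 0 := by nlinarith [hmem.2]
        have hk2 : (-1:ℝ) < (k:ℝ) := by nlinarith [hmem.1]
        have hk0 : k = 0 := by
          have h1 : k ≤ 0 := by exact_mod_cast hk1
          have h2 : (-1:ℤ) < k := by exact_mod_cast hk2
          omega
        rw [hk0] at hk
        push_cast at hk
        exact hθπ (by linarith)
    have hcont : ContinuousAt (fun x : ℝ => 1 + x * Real.cos θ) η := by
      apply Continuous.continuousAt
      exact continuous_const.add (continuous_id.mul continuous_const)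
    have hev : ∀ᶠ x in nhds η, 0 < 1 + x * Real.cos θ := hcont.eventually (eventually_gt_nhds hpos)
    have heq : (fun x : ℝ => pser c0 (1 + x * Real.cos θ)
          * Real.exp (J₂ * Real.cos (2 * θ)) / (2 * π)) =ᶠ[nhds η]
        (fun x => besselI0 (Real.sqrt (1 + x * Real.cos θ))
          * Real.exp (J₂ * Real.cos (2 * θ)) / (2 * π)) := by
      filter_upwards [hev] with x hx
      rw [besselI0_sqrt, max_eq_left hx.le]
    have hinner : HasDerivAt (fun x : ℝ => 1 + x * Real.cos θ) (Real.cos θ) η := by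
      simpa using ((hasDerivAt_id η).mul_const (Real.cos θ)).const_add 1
    have hd : HasDerivAt (fun x : ℝ => pser c0 (1 + x * Real.cos θ)
          * Real.exp (J₂ * Real.cos (2 * θ)) / (2 * π))
        (besselI1ratio (1 + η * Real.cos θ) / 2 * Real.cos θ
          * Real.exp (J₂ * Real.cos (2 * θ)) / (2 * π)) η :=
      (((hasDerivAt_B0 (1 + η * Real.cos θ)).comp η hinner).mul_const _).div_const _
    exact hd.congr_of_eventuallyEq heq.symm

open MeasureTheory in
lemma deriv_nonneg (J₂ : ℝ) {η : ℝ} (hη : η ∈ Set.Icc (0:ℝ) 1) :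
    0 ≤ ∫ θ in (-π)..π, besselI1ratio (1 + η * Real.cos θ) / 2 * Real.cos θ
        * Real.exp (J₂ * Real.cos (2 * θ)) / (2 * π) := by
  obtain ⟨hη0, hη1⟩ := hη
  have hπ : 0 < π := Real.pi_pos
  set f : ℝ → ℝ := fun θ => besselI1ratio (1 + η * Real.cos θ) / 2 * Real.cos θ
      * Real.exp (J₂ * Real.cos (2 * θ)) / (2 * π) with hfdef
  have hfcont : Continuous f := by
    apply Continuous.div_const
    exact (((cont_I1r.comp
        (continuous_const.add (continuous_const.mul Real.continuous_cos))).div_const 2).mul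
        Real.continuous_cos).mul
      (Real.continuous_exp.comp (continuous_const.mul
        (Real.continuous_cos.comp (continuous_const.mul continuous_id))))
  have hper : Function.Periodic f (2 * π) := by
    intro θ
    have h1 : Real.cos (θ + 2 * π) = Real.cos θ := Real.cos_add_two_pi θ
    have h2 : Real.cos (2 * (θ + 2 * π)) = Real.cos (2 * θ) := by
      rw [show 2 * (θ + 2 * π) = (2 * θ + 2 * π) + 2 * π by ring,
        Real.cos_add_two_pi, Real.cos_add_two_pi]
    simp only [hfdef, h1, h2]
  have key : (∫ θ in (-π)..π, f (π - θ)) = ∫ θ in (-π)..π, f θ := by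
    rw [intervalIntegral.integral_comp_sub_left f π]
    have h := hper.intervalIntegral_add_eq 0 (-π)
    rw [zero_add] at h
    rw [show π - π = (0:ℝ) by ring, show π - -π = 2 * π by ring, h,
      show -π + 2 * π = π by ring]
  have hpoint : ∀ θ, 0 ≤ f θ + f (π - θ) := by
    intro θ
    have hc1 : -1 ≤ Real.cos θ := Real.neg_one_le_cos θ
    have hc2 : Real.cos θ ≤ 1 := Real.cos_le_one θ
    have hcos1 : Real.cos (π - θ) = -Real.cos θ := Real.cos_pi_sub θ
    have hcos2 : Real.cos (2 * (π - θ)) = Real.cos (2 * θ) := by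
      rw [show 2 * (π - θ) = -(2 * θ) + 2 * π by ring, Real.cos_add_two_pi, Real.cos_neg]
    have hkey : 0 ≤ (besselI1ratio (1 + η * Real.cos θ)
        - besselI1ratio (1 - η * Real.cos θ)) * Real.cos θ := by
      rcases le_total 0 (Real.cos θ) with hc | hc
      · apply mul_nonneg _ hc
        rw [sub_nonneg]
        exact I1r_mono (by nlinarith) (by nlinarith)
      · have hle : besselI1ratio (1 + η * Real.cos θ)
            ≤ besselI1ratio (1 - η * Real.cos θ) := I1r_mono (by nlinarith) (by nlinarith)
        nlinarith
    have heq : f θ + f (π - θ) = (besselI1ratio (1 + η * Real.cos θ)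
        - besselI1ratio (1 - η * Real.cos θ)) * Real.cos θ
        * (Real.exp (J₂ * Real.cos (2 * θ)) / (4 * π)) := by
      simp only [hfdef]
      rw [hcos1, hcos2, show 1 + η * -Real.cos θ = 1 - η * Real.cos θ by ring]
      ring
    rw [heq]
    exact mul_nonneg hkey (by positivity)
  have hint1 : IntervalIntegrable f volume (-π) π := hfcont.intervalIntegrable _ _
  have hint2 : IntervalIntegrable (fun θ => f (π - θ)) volume (-π) π :=
    (hfcont.comp (continuous_const.sub continuous_id)).intervalIntegrable _ _
  have hnn : (0:ℝ) ≤ ∫ θ in (-π)..π, (f θ + f (π - θ)) :=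
    intervalIntegral.integral_nonneg (by linarith) (fun θ _ => hpoint θ)
  rw [intervalIntegral.integral_add hint1 hint2, key] at hnn
  linarith

end KJ2aux

theorem KJ2eta_monotone
    (J₂ : ℝ) (hJ₂ : 0 < J₂) :
    (∀ η ∈ Set.Icc (0:ℝ) 1,
      HasDerivAt (KJ2eta J₂)
        (∫ θ in (-π)..π,
          (besselI1ratio (1 + η * Real.cos θ) / 2) * Real.cos θ
            * Real.exp (J₂ * Real.cos (2 * θ)) / (2 * π)) η ∧
      0 ≤ ∫ θ in (-π)..π,
            (besselI1ratio (1 + η * Real.cos θ) / 2) * Real.cos θ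
              * Real.exp (J₂ * Real.cos (2 * θ)) / (2 * π)) ∧
    MonotoneOn (KJ2eta J₂) (Set.Icc (0:ℝ) 1) ∧
    (∀ η ∈ Set.Icc (0:ℝ) 1, KJ2eta J₂ η ≤ KJ2eta J₂ 1) := by
  have hKeq : KJ2eta J₂ = fun x => ∫ θ in (-π)..π,
      besselI0 (Real.sqrt (1 + x * Real.cos θ)) * Real.exp (J₂ * Real.cos (2 * θ)) / (2 * π) :=
    rfl
  have hderiv : ∀ η ∈ Set.Icc (0:ℝ) 1,
      HasDerivAt (KJ2eta J₂)
        (∫ θ in (-π)..π, besselI1ratio (1 + η * Real.cos θ) / 2 * Real.cos θ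
          * Real.exp (J₂ * Real.cos (2 * θ)) / (2 * π)) η := by
    intro η hη
    rw [hKeq]
    exact (KJ2aux.key_hasDerivAt J₂ hη).2
  have hmono : MonotoneOn (KJ2eta J₂) (Set.Icc (0:ℝ) 1) := by
    apply monotoneOn_of_deriv_nonneg (convex_Icc 0 1)
    · exact fun η hη => (hderiv η hη).continuousAt.continuousWithinAt
    · intro η hη
      rw [interior_Icc] at hη
      exact (hderiv η (Set.mem_Icc_of_Ioo hη)).differentiableAt.differentiableWithinAt
    · intro η hη
      rw [interior_Icc] at hη
      rw [(hderiv η (Set.mem_Icc_of_Ioo hη)).deriv]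
      exact KJ2aux.deriv_nonneg J₂ (Set.mem_Icc_of_Ioo hη)
  exact ⟨fun η hη => ⟨hderiv η hη, KJ2aux.deriv_nonneg J₂ hη⟩, hmono,
    fun η hη => hmono hη (Set.right_mem_Icc.mpr zero_le_one) hη.2⟩
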